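/- Let M ∈ ℝ^{m×n}, let N ≥ 1, and for i = 1,…,N let G_i ∈ ℝ^{p_i×m} and H_i ∈ ℝ^{n×q_i}. Suppose Λ_1,…,Λ_N with Λ_i ∈ ℝ^{p_i×q_i} satisfy G_j M H_j = Σ_{i=1}^N G_j G_iᵀ Λ_i H_iᵀ H_j for every j = 1,…,N, and set D = M − Σ_{i=1}^N G_iᵀ Λ_i H_iᵀ. Then D minimizes the Frobenius distance to M over the feasible set: for every D' ∈ ℝ^{m×n} with G_i D' H_i = 0 for all i = 1,…,N, one has ‖M − D‖_F ≤ ‖M − D'‖_F. -/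

import Mathlib

open Matrix

attribute [local instance] Matrix.frobeniusNormedAddCommGroup

/-!
Write `S = Σ Gᵢᵀ Λᵢ Hᵢᵀ`, so that `M − D = S`. For a feasible `D'`, the multiplier equations say
exactly that `E = M − D' − S` satisfies `Gⱼ E Hⱼ = 0` for every `j`. Since
`⟨Gᵢᵀ Λᵢ Hᵢᵀ, E⟩_F = ⟨Λᵢ, Gᵢ E Hᵢ⟩_F`, the matrix `S` is Frobenius-orthogonal to `E`, and
Pythagoras gives `‖M − D'‖² = ‖S + E‖² = ‖S‖² + ‖E‖² ≥ ‖S‖²`.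
-/

namespace Matrix

variable {m n : Type*} [Fintype m] [Fintype n]

theorem frobenius_norm_sq_eq_trace (A : Matrix m n ℝ) : ‖A‖ ^ 2 = (Aᵀ * A).trace := by
  rw [frobenius_norm_def, ← Real.rpow_natCast, ← Real.rpow_mul (by positivity)]
  norm_num [trace, mul_apply, sq]
  exact Finset.sum_comm

theorem frobenius_norm_add_sq_of_trace_transpose_mul_eq_zero {A B : Matrix m n ℝ}
    (h : (Aᵀ * B).trace = 0) : ‖A + B‖ ^ 2 = ‖A‖ ^ 2 + ‖B‖ ^ 2 := by
  have h' : (Bᵀ * A).trace = 0 := by rw [← trace_transpose, transpose_mul, transpose_transpose, h]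
  simp only [frobenius_norm_sq_eq_trace, transpose_add, Matrix.add_mul, Matrix.mul_add, trace_add,
    h, h']
  ring

theorem frobenius_norm_le_norm_add_of_trace_transpose_mul_eq_zero {A B : Matrix m n ℝ}
    (h : (Aᵀ * B).trace = 0) : ‖A‖ ≤ ‖A + B‖ := by
  refine le_of_sq_le_sq ?_ (norm_nonneg _)
  rw [frobenius_norm_add_sq_of_trace_transpose_mul_eq_zero h]
  nlinarith [sq_nonneg ‖B‖]

variable {R p q : Type*} [CommSemiring R] [Fintype p] [Fintype q]

theorem trace_transpose_sandwich_mul (G : Matrix p m R) (L : Matrix p q R) (H : Matrix n q R)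
    (E : Matrix m n R) : ((Gᵀ * L * Hᵀ)ᵀ * E).trace = (Lᵀ * (G * E * H)).trace := by
  simp only [transpose_mul, transpose_transpose, Matrix.mul_assoc]
  rw [trace_mul_comm]
  simp only [Matrix.mul_assoc]

theorem trace_transpose_sum_sandwich_mul_eq_zero {ι : Type*} (s : Finset ι) {p q : ι → Type*}
    [∀ i, Fintype (p i)] [∀ i, Fintype (q i)] (G : ∀ i, Matrix (p i) m R)
    (L : ∀ i, Matrix (p i) (q i) R) (H : ∀ i, Matrix n (q i) R) {E : Matrix m n R}
    (hE : ∀ i ∈ s, G i * E * H i = 0) :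
    ((∑ i ∈ s, (G i)ᵀ * L i * (H i)ᵀ)ᵀ * E).trace = 0 := by
  rw [transpose_sum, Matrix.sum_mul, trace_sum]
  refine Finset.sum_eq_zero fun i hi => ?_
  rw [trace_transpose_sandwich_mul, hE i hi, Matrix.mul_zero, trace_zero]

end Matrix

theorem multi_constraint_projection_minimizes_general {m n N : ℕ}
    (M : Matrix (Fin m) (Fin n) ℝ)
    (p q : Fin N → ℕ)
    (G : ∀ i : Fin N, Matrix (Fin (p i)) (Fin m) ℝ)
    (H : ∀ i : Fin N, Matrix (Fin n) (Fin (q i)) ℝ)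
    (Λ : ∀ i : Fin N, Matrix (Fin (p i)) (Fin (q i)) ℝ)
    (hΛ : ∀ j : Fin N,
      G j * M * H j = ∑ i : Fin N, G j * (G i)ᵀ * Λ i * (H i)ᵀ * H j) :
    ∀ D' : Matrix (Fin m) (Fin n) ℝ, (∀ i : Fin N, G i * D' * H i = 0) →
      ‖M - (M - ∑ i : Fin N, (G i)ᵀ * Λ i * (H i)ᵀ)‖ ≤ ‖M - D'‖ := by
  intro D' hD'
  set S := ∑ i : Fin N, (G i)ᵀ * Λ i * (H i)ᵀ
  have hres : ∀ j, G j * (M - D' - S) * H j = 0 := by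
    intro j
    have hS : G j * S * H j = ∑ i : Fin N, G j * (G i)ᵀ * Λ i * (H i)ᵀ * H j := by
      simp only [S, Matrix.mul_sum, Matrix.sum_mul, Matrix.mul_assoc]
    rw [Matrix.mul_sub, Matrix.mul_sub, Matrix.sub_mul, Matrix.sub_mul, hD' j, hS, ← hΛ j,
      sub_zero, sub_self]
  rw [sub_sub_cancel, show M - D' = S + (M - D' - S) by abel]
  exact frobenius_norm_le_norm_add_of_trace_transpose_mul_eq_zero
    (trace_transpose_sum_sandwich_mul_eq_zero _ G Λ H fun j _ => hres j)

/-- If the multipliers `Λ_i` solve the coupled equations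
`G_j M H_j = Σ_i G_j G_iᵀ Λ_i H_iᵀ H_j` for all `j`, then
`D = M − Σ_i G_iᵀ Λ_i H_iᵀ` minimizes the Frobenius distance to `M` over the set of
matrices satisfying all the structural constraints. -/
theorem multi_constraint_projection_minimizes {m n N : ℕ} (hN : 1 ≤ N)
    (M : Matrix (Fin m) (Fin n) ℝ)
    (p q : Fin N → ℕ)
    (G : ∀ i : Fin N, Matrix (Fin (p i)) (Fin m) ℝ)
    (H : ∀ i : Fin N, Matrix (Fin n) (Fin (q i)) ℝ)
    (Λ : ∀ i : Fin N, Matrix (Fin (p i)) (Fin (q i)) ℝ)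
    (hΛ : ∀ j : Fin N,
      G j * M * H j = ∑ i : Fin N, G j * (G i)ᵀ * Λ i * (H i)ᵀ * H j) :
    ∀ D' : Matrix (Fin m) (Fin n) ℝ, (∀ i : Fin N, G i * D' * H i = 0) →
      ‖M - (M - ∑ i : Fin N, (G i)ᵀ * Λ i * (H i)ᵀ)‖ ≤ ‖M - D'‖ :=
  multi_constraint_projection_minimizes_general M p q G H Λ hΛ
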